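/- For every homogeneous polynomial p of degree n in d variables, |||p|||₁ ≤ |||p|||₂ ≤ √d · |||p|||₁. -/

import Mathlib

noncomputable section
open scoped ComplexOrder
namespace WP

abbrev MvP (d : ℕ) := MvPolynomial (Fin d) ℂ

/-- The Cauchy pairing `⟨p,q⟩₂ = ∑_α a_α conj(b_α)` of coefficient vectors. -/
def pairing {d : ℕ} (p q : MvP d) : ℂ :=
  ∑ α ∈ p.support, p.coeff α * (starRingEnd ℂ) (q.coeff α)

/-- The Hardy norm `‖p‖₂`: the `ℓ²` norm of the coefficient vector. -/
def norm2 {d : ℕ} (p : MvP d) : ℝ :=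
  Real.sqrt (∑ α ∈ p.support, ‖p.coeff α‖ ^ 2)

/-- The weak product norm `‖p‖_{P_{d,k} ⊙ P_{d,l}}`. -/
def wpNorm (d k l : ℕ) (p : MvP d) : ℝ :=
  sInf {x : ℝ | ∃ (m : ℕ) (f g : Fin m → MvP d),
    (∀ j, (f j).IsHomogeneous k) ∧ (∀ j, (g j).IsHomogeneous l) ∧
    p = ∑ j, f j * g j ∧ x = ∑ j, norm2 (f j) * norm2 (g j)}

/-- The weak product norm `‖p‖_{Z_d ⊙ P_{d,k} ⊙ P_{d,l}}`. -/
def zwpNorm (d k l : ℕ) (p : MvP d) : ℝ :=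
  sInf {x : ℝ | ∃ f : Fin d → MvP d,
    (∀ i, (f i).IsHomogeneous (k + l)) ∧
    p = ∑ i, MvPolynomial.X i * f i ∧ x = ∑ i, wpNorm d k l (f i)}

/-- `|||p|||₁ = max_{0 ≤ k ≤ n} ‖p‖_{P_{d,k} ⊙ P_{d,n-k}}`. -/
def triple1 (d n : ℕ) (p : MvP d) : ℝ :=
  ⨆ k : Fin (n + 1), wpNorm d k (n - k) p

/-- `|||p|||₂ = max_{0 ≤ k ≤ n-1} ‖p‖_{Z_d ⊙ P_{d,k} ⊙ P_{d,n-k-1}}`. -/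
def triple2 (d n : ℕ) (p : MvP d) : ℝ :=
  ⨆ k : Fin n, zwpNorm d k (n - 1 - k) p

/-!
A homogeneous `q` of positive degree splits as `q = ∑ᵢ Xᵢ Qᵢ` by sorting its monomials according
to their least variable; the pieces have disjoint supports, so `∑ᵢ ‖Qᵢ‖₂² = ‖q‖₂²`, and
multiplication by `Xᵢ` is an isometry for `‖·‖₂`.

`|||p|||₁ ≤ |||p|||₂`: a representation `p = ∑ᵢ Xᵢ Fᵢ` with `Fᵢ = ∑ⱼ fᵢⱼ gᵢⱼ` gives
`p = ∑ᵢⱼ fᵢⱼ (Xᵢ gᵢⱼ)` at the same cost. The term `k = n` of `|||p|||₁` is reduced to `k = 0` by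
the symmetry of the weak product norm.

`|||p|||₂ ≤ √d |||p|||₁`: splitting every left factor of `p = ∑ⱼ fⱼ gⱼ` as `fⱼ = ∑ᵢ Xᵢ Qⱼᵢ` gives
`p = ∑ᵢ Xᵢ (∑ⱼ Qⱼᵢ gⱼ)`, and Cauchy–Schwarz bounds `∑ᵢ ‖Qⱼᵢ‖₂` by `√d ‖fⱼ‖₂`.
-/
open MvPolynomial Finset
open scoped Pointwise

section FilterMonomials

variable {σ R : Type*} [CommSemiring R]

def filterMonomials (P : (σ →₀ ℕ) → Prop) [DecidablePred P] (q : MvPolynomial σ R) :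
    MvPolynomial σ R :=
  ∑ α ∈ q.support with P α, monomial α (q.coeff α)

lemma coeff_filterMonomials (P : (σ →₀ ℕ) → Prop) [DecidablePred P] (q : MvPolynomial σ R)
    (β : σ →₀ ℕ) : (filterMonomials P q).coeff β = if P β then q.coeff β else 0 := by
  classical
  simp only [filterMonomials, coeff_sum, coeff_monomial, sum_ite_eq', mem_filter, mem_support_iff]
  by_cases hβ : q.coeff β = 0 <;> simp [hβ]

lemma sum_filterMonomials_fiber {ι : Type*} [Fintype ι] [DecidableEq ι] (g : (σ →₀ ℕ) → ι)
    (q : MvPolynomial σ R) : ∑ i, filterMonomials (g · = i) q = q := by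
  simp only [filterMonomials]
  rw [sum_fiberwise, support_sum_monomial_coeff]

lemma _root_.MvPolynomial.IsHomogeneous.filterMonomials {P : (σ →₀ ℕ) → Prop} [DecidablePred P]
    {q : MvPolynomial σ R} {n : ℕ} (hq : q.IsHomogeneous n) :
    (filterMonomials P q).IsHomogeneous n := by
  intro α hα
  rw [coeff_filterMonomials] at hα
  split_ifs at hα
  · exact hq hα
  · exact absurd rfl hα

lemma _root_.MvPolynomial.IsHomogeneous.X_mul {p : MvPolynomial σ R} {n : ℕ}
    (hp : p.IsHomogeneous n) (i : σ) :
    (X i * p).IsHomogeneous (n + 1) :=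
  add_comm 1 n ▸ (isHomogeneous_X R i).mul hp

lemma _root_.MvPolynomial.IsHomogeneous.of_X_mul {p : MvPolynomial σ R} {n : ℕ} {i : σ}
    (h : (X i * p).IsHomogeneous (n + 1)) : p.IsHomogeneous n := by
  intro β hβ
  rw [← coeff_X_mul β i] at hβ
  have := h hβ
  rw [map_add, Finsupp.weight_single, Pi.one_apply, smul_eq_mul, mul_one] at this
  omega

lemma X_dvd_of_coeff_ne_zero {p : MvPolynomial σ R} {i : σ}
    (h : ∀ α, p.coeff α ≠ 0 → α i ≠ 0) : X i ∣ p := by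
  rw [X_dvd_iff_modMonomial_eq_zero]
  ext β
  by_cases hβ : Finsupp.single i 1 ≤ β
  · rw [coeff_modMonomial_of_le _ hβ, coeff_zero]
  · rw [coeff_modMonomial_of_not_le _ hβ, coeff_zero]
    by_contra hne
    exact hβ (Finsupp.single_le_iff.mpr (Nat.one_le_iff_ne_zero.mpr (h β hne)))

lemma sum_withTop {ι M : Type*} [Fintype ι] [AddCommMonoid M] (f : WithTop ι → M) :
    ∑ o, f o = f ⊤ + ∑ i : ι, f i :=
  Fintype.sum_option f

end FilterMonomials

section HardyNorm

variable {d : ℕ}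

def normSq (p : MvP d) : ℝ :=
  ∑ α ∈ p.support, ‖p.coeff α‖ ^ 2

lemma norm2_eq_sqrt_normSq (p : MvP d) : norm2 p = √(normSq p) := rfl

lemma normSq_zero : normSq (0 : MvP d) = 0 := by
  simp [normSq]

lemma normSq_nonneg (p : MvP d) : 0 ≤ normSq p :=
  sum_nonneg fun _ _ => by positivity

lemma norm2_nonneg (p : MvP d) : 0 ≤ norm2 p :=
  Real.sqrt_nonneg _

lemma normSq_eq_sum_of_support_subset {p : MvP d} {s : Finset (Fin d →₀ ℕ)}
    (hs : p.support ⊆ s) : normSq p = ∑ α ∈ s, ‖p.coeff α‖ ^ 2 :=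
  sum_subset hs fun α _ hα => by simp [notMem_support_iff.mp hα]

lemma normSq_X_mul (i : Fin d) (p : MvP d) : normSq (X i * p) = normSq p := by
  rw [normSq, support_X_mul, sum_map]
  exact sum_congr rfl fun α _ => by simp [coeff_X_mul]

lemma norm2_X_mul (i : Fin d) (p : MvP d) : norm2 (X i * p) = norm2 p := by
  rw [norm2_eq_sqrt_normSq, norm2_eq_sqrt_normSq, normSq_X_mul]

lemma sum_normSq_filterMonomials_fiber {ι : Type*} [Fintype ι] [DecidableEq ι]
    (g : (Fin d →₀ ℕ) → ι) (q : MvP d) :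
    ∑ i, normSq (filterMonomials (g · = i) q) = normSq q := by
  have hsupp : ∀ i, (filterMonomials (g · = i) q).support ⊆ q.support := fun i α hα => by
    rw [mem_support_iff, coeff_filterMonomials] at hα
    split_ifs at hα
    · exact mem_support_iff.mpr hα
    · exact absurd rfl hα
  simp_rw [normSq_eq_sum_of_support_subset (hsupp _), coeff_filterMonomials]
  rw [sum_comm, normSq]
  refine sum_congr rfl fun α _ => ?_
  simp [apply_ite (fun x : ℂ => ‖x‖ ^ 2)]

lemma sum_norm2_le_sqrt_card_mul {ι : Type*} [Fintype ι] {Q : ι → MvP d} {f : MvP d}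
    (h : ∑ i, normSq (Q i) ≤ normSq f) : ∑ i, norm2 (Q i) ≤ √(Fintype.card ι) * norm2 f := by
  calc ∑ i, norm2 (Q i) = ∑ i, √1 * √(normSq (Q i)) := by simp [norm2_eq_sqrt_normSq]
    _ ≤ √(∑ _i : ι, (1 : ℝ)) * √(∑ i, normSq (Q i)) :=
      Real.sum_sqrt_mul_sqrt_le _ (fun _ => zero_le_one) fun i => normSq_nonneg _
    _ ≤ √(Fintype.card ι) * norm2 f := by
      rw [norm2_eq_sqrt_normSq]
      simp only [sum_const, card_univ, nsmul_eq_mul, mul_one]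
      gcongr

lemma exists_eq_sum_X_mul {m : ℕ} {q : MvP d} (hq : q.IsHomogeneous (m + 1)) :
    ∃ Q : Fin d → MvP d, (∀ i, (Q i).IsHomogeneous m) ∧ q = ∑ i, X i * Q i ∧
      ∑ i, normSq (Q i) = normSq q := by
  classical
  set P : WithTop (Fin d) → MvP d := fun o => filterMonomials (fun α => α.support.min = o) q
    with hP
  have hP_top : P ⊤ = 0 := by
    ext α
    rw [hP, coeff_filterMonomials, coeff_zero]
    split_ifs with h
    · rw [Finset.min_eq_top, Finsupp.support_eq_empty] at h
      exact hq.coeff_eq_zero (by simp [h])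
    · rfl
  have hdvd : ∀ i : Fin d, X i ∣ P i := fun i => X_dvd_of_coeff_ne_zero fun α hα => by
    rw [hP, coeff_filterMonomials] at hα
    split_ifs at hα with h
    · exact Finsupp.mem_support_iff.mp (mem_of_min h)
    · exact absurd rfl hα
  have hP_hom : ∀ o, (P o).IsHomogeneous (m + 1) := fun o => hq.filterMonomials
  choose Q hQ using hdvd
  refine ⟨Q, fun i => (hQ i ▸ hP_hom i).of_X_mul, ?_, ?_⟩
  · have h : P ⊤ + ∑ i : Fin d, P i = q :=
      (sum_withTop P).symm.trans (sum_filterMonomials_fiber _ q)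
    simp only [hP_top, zero_add, hQ] at h
    exact h.symm
  · have h : normSq (P ⊤) + ∑ i : Fin d, normSq (P i) = normSq q :=
      (sum_withTop (normSq ∘ P)).symm.trans (sum_normSq_filterMonomials_fiber _ q)
    simpa only [hP_top, normSq_zero, zero_add, hQ, normSq_X_mul] using h

end HardyNorm

section WeakProduct

variable {d k l : ℕ} {p q : MvP d} {x y : ℝ}

def wpSet (d k l : ℕ) (p : MvP d) : Set ℝ :=
  {x : ℝ | ∃ (m : ℕ) (f g : Fin m → MvP d),
    (∀ j, (f j).IsHomogeneous k) ∧ (∀ j, (g j).IsHomogeneous l) ∧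
    p = ∑ j, f j * g j ∧ x = ∑ j, norm2 (f j) * norm2 (g j)}

lemma wpNorm_eq_sInf (d k l : ℕ) (p : MvP d) : wpNorm d k l p = sInf (wpSet d k l p) := rfl

lemma nonneg_of_mem_wpSet (hx : x ∈ wpSet d k l p) : 0 ≤ x := by
  obtain ⟨m, f, g, -, -, -, rfl⟩ := hx
  exact sum_nonneg fun j _ => mul_nonneg (norm2_nonneg _) (norm2_nonneg _)

lemma wpSet_bddBelow : BddBelow (wpSet d k l p) :=
  ⟨0, fun _ => nonneg_of_mem_wpSet⟩

lemma wpNorm_nonneg : 0 ≤ wpNorm d k l p :=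
  Real.sInf_nonneg fun _ => nonneg_of_mem_wpSet

lemma wpNorm_sum_mul_le {m : ℕ} {f g : Fin m → MvP d} (hf : ∀ j, (f j).IsHomogeneous k)
    (hg : ∀ j, (g j).IsHomogeneous l) :
    wpNorm d k l (∑ j, f j * g j) ≤ ∑ j, norm2 (f j) * norm2 (g j) :=
  csInf_le wpSet_bddBelow ⟨m, f, g, hf, hg, rfl, rfl⟩

lemma mem_wpSet_comm (hx : x ∈ wpSet d k l p) : x ∈ wpSet d l k p := by
  obtain ⟨m, f, g, hf, hg, rfl, rfl⟩ := hx
  exact ⟨m, g, f, hg, hf, by simp only [mul_comm], by simp only [mul_comm]⟩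

lemma wpNorm_comm (d k l : ℕ) (p : MvP d) : wpNorm d k l p = wpNorm d l k p :=
  congrArg sInf (Set.ext fun _ => ⟨mem_wpSet_comm, mem_wpSet_comm⟩)

lemma zero_mem_wpSet_zero : (0 : ℝ) ∈ wpSet d k l 0 :=
  ⟨0, Fin.elim0, Fin.elim0, (·.elim0), (·.elim0), by simp, by simp⟩

lemma add_mem_wpSet (hx : x ∈ wpSet d k l p) (hy : y ∈ wpSet d k l q) :
    x + y ∈ wpSet d k l (p + q) := by
  obtain ⟨m, f, g, hf, hg, rfl, rfl⟩ := hx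
  obtain ⟨m', f', g', hf', hg', rfl, rfl⟩ := hy
  refine ⟨m + m', Fin.append f f', Fin.append g g', Fin.addCases ?_ ?_, Fin.addCases ?_ ?_,
    ?_, ?_⟩ <;> simp [Fin.sum_univ_add, *]

lemma sum_mem_wpSet {ι : Type*} (s : Finset ι) {F : ι → MvP d} {x : ι → ℝ}
    (hx : ∀ i ∈ s, x i ∈ wpSet d k l (F i)) : ∑ i ∈ s, x i ∈ wpSet d k l (∑ i ∈ s, F i) := by
  classical
  induction s using Finset.induction_on with
  | empty => simpa using zero_mem_wpSet_zero
  | insert a s ha ih =>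
    rw [sum_insert ha, sum_insert ha]
    exact add_mem_wpSet (hx a (mem_insert_self a s)) (ih fun i hi => hx i (mem_insert_of_mem hi))

lemma X_mul_mem_wpSet (i : Fin d) (hx : x ∈ wpSet d k l p) : x ∈ wpSet d k (l + 1) (X i * p) := by
  obtain ⟨m, f, g, hf, hg, rfl, rfl⟩ := hx
  refine ⟨m, f, fun j => X i * g j, hf, fun j => (hg j).X_mul i, ?_, by simp only [norm2_X_mul]⟩
  simp only [mul_sum, mul_left_comm]

lemma wpSet_nonempty (hp : p.IsHomogeneous (k + l)) : (wpSet d k l p).Nonempty := by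
  induction l generalizing p with
  | zero => exact ⟨_, 1, fun _ => p, fun _ => 1, fun _ => hp, fun _ => isHomogeneous_one _ _,
      by simp, rfl⟩
  | succ l ih =>
    obtain ⟨Q, hQ, rfl, -⟩ := exists_eq_sum_X_mul hp
    choose x hx using fun i => ih (hQ i)
    exact ⟨_, sum_mem_wpSet univ fun i _ => X_mul_mem_wpSet i (hx i)⟩

lemma wpNorm_add_le (hp : p.IsHomogeneous (k + l)) (hq : q.IsHomogeneous (k + l)) :
    wpNorm d k l (p + q) ≤ wpNorm d k l p + wpNorm d k l q := by
  calc wpNorm d k l (p + q) ≤ sInf (wpSet d k l p + wpSet d k l q) :=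
        csInf_le_csInf wpSet_bddBelow ((wpSet_nonempty hp).add (wpSet_nonempty hq))
          (Set.add_subset_iff.mpr fun _ hx _ hy => add_mem_wpSet hx hy)
    _ = wpNorm d k l p + wpNorm d k l q :=
        csInf_add (wpSet_nonempty hp) wpSet_bddBelow (wpSet_nonempty hq) wpSet_bddBelow

lemma wpNorm_sum_le {ι : Type*} (s : Finset ι) {F : ι → MvP d}
    (hF : ∀ i ∈ s, (F i).IsHomogeneous (k + l)) :
    wpNorm d k l (∑ i ∈ s, F i) ≤ ∑ i ∈ s, wpNorm d k l (F i) := by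
  classical
  induction s using Finset.induction_on with
  | empty =>
    rw [sum_empty, sum_empty]
    exact csInf_le wpSet_bddBelow zero_mem_wpSet_zero
  | insert a s ha ih =>
    have hs : ∀ i ∈ s, (F i).IsHomogeneous (k + l) := fun i hi => hF i (mem_insert_of_mem hi)
    rw [sum_insert ha, sum_insert ha]
    exact (wpNorm_add_le (hF a (mem_insert_self a s)) (IsHomogeneous.sum s F _ hs)).trans
      (add_le_add le_rfl (ih hs))

lemma wpNorm_X_mul_le (i : Fin d) (hp : p.IsHomogeneous (k + l)) :
    wpNorm d k (l + 1) (X i * p) ≤ wpNorm d k l p :=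
  csInf_le_csInf wpSet_bddBelow (wpSet_nonempty hp) fun _ => X_mul_mem_wpSet i

end WeakProduct

section ZWeakProduct

variable {d k l : ℕ} {p : MvP d} {x : ℝ}

def zwpSet (d k l : ℕ) (p : MvP d) : Set ℝ :=
  {x : ℝ | ∃ f : Fin d → MvP d,
    (∀ i, (f i).IsHomogeneous (k + l)) ∧
    p = ∑ i, X i * f i ∧ x = ∑ i, wpNorm d k l (f i)}

lemma zwpSet_bddBelow : BddBelow (zwpSet d k l p) :=
  ⟨0, by rintro _ ⟨F, -, -, rfl⟩; exact sum_nonneg fun _ _ => wpNorm_nonneg⟩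

lemma zwpSet_nonempty (hp : p.IsHomogeneous (k + l + 1)) : (zwpSet d k l p).Nonempty :=
  let ⟨Q, hQ, hpQ, _⟩ := exists_eq_sum_X_mul hp
  ⟨_, Q, hQ, hpQ, rfl⟩

lemma zwpNorm_sum_X_mul_le {F : Fin d → MvP d} (hF : ∀ i, (F i).IsHomogeneous (k + l)) :
    zwpNorm d k l (∑ i, X i * F i) ≤ ∑ i, wpNorm d k l (F i) :=
  csInf_le zwpSet_bddBelow ⟨F, hF, rfl, rfl⟩

lemma wpNorm_le_zwpNorm (hp : p.IsHomogeneous (k + l + 1)) :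
    wpNorm d k (l + 1) p ≤ zwpNorm d k l p := by
  refine le_csInf (zwpSet_nonempty hp) ?_
  rintro _ ⟨F, hF, rfl, rfl⟩
  calc wpNorm d k (l + 1) (∑ i, X i * F i) ≤ ∑ i, wpNorm d k (l + 1) (X i * F i) :=
        wpNorm_sum_le univ fun i _ => (hF i).X_mul i
    _ ≤ ∑ i, wpNorm d k l (F i) := sum_le_sum fun i _ => wpNorm_X_mul_le i (hF i)

lemma zwpNorm_le_sqrt_mul_of_mem_wpSet (hx : x ∈ wpSet d (k + 1) l p) :
    zwpNorm d k l p ≤ √d * x := by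
  obtain ⟨m, f, g, hf, hg, rfl, rfl⟩ := hx
  choose Q hQ hfQ hnorm using fun j => exists_eq_sum_X_mul (hf j)
  have hsum : ∑ j, f j * g j = ∑ i, X i * ∑ j, Q j i * g j := by
    simp_rw [hfQ, sum_mul, mul_sum, mul_assoc]
    exact sum_comm
  calc zwpNorm d k l (∑ j, f j * g j) ≤ ∑ i, wpNorm d k l (∑ j, Q j i * g j) :=
        hsum ▸ zwpNorm_sum_X_mul_le fun i => IsHomogeneous.sum _ _ _ fun j _ => (hQ j i).mul (hg j)
    _ ≤ ∑ i, ∑ j, norm2 (Q j i) * norm2 (g j) :=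
        sum_le_sum fun i _ => wpNorm_sum_mul_le (fun j => hQ j i) hg
    _ = ∑ j, (∑ i, norm2 (Q j i)) * norm2 (g j) := by
        rw [sum_comm]
        simp_rw [sum_mul]
    _ ≤ ∑ j, √d * norm2 (f j) * norm2 (g j) := by
        gcongr with j
        · exact norm2_nonneg _
        · simpa using sum_norm2_le_sqrt_card_mul (hnorm j).le
    _ = √d * ∑ j, norm2 (f j) * norm2 (g j) := by
        rw [mul_sum]
        simp_rw [mul_assoc]

lemma zwpNorm_le_sqrt_mul_wpNorm (hp : p.IsHomogeneous (k + 1 + l)) :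
    zwpNorm d k l p ≤ √d * wpNorm d (k + 1) l p := by
  rw [wpNorm_eq_sInf, ← smul_eq_mul, ← Real.sInf_smul_of_nonneg (Real.sqrt_nonneg _)]
  refine le_csInf (wpSet_nonempty hp).smul_set ?_
  rintro _ ⟨x, hx, rfl⟩
  exact zwpNorm_le_sqrt_mul_of_mem_wpSet hx

end ZWeakProduct

section Triple

variable {d n : ℕ} {p : MvP d}

lemma wpNorm_le_triple2 (hn : 1 ≤ n) (hp : p.IsHomogeneous n) {k : ℕ} (hk : k ≤ n) :
    wpNorm d k (n - k) p ≤ triple2 d n p := by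
  have hlt : ∀ k < n, wpNorm d k (n - k) p ≤ triple2 d n p := fun k hk => by
    have hp' : p.IsHomogeneous (k + (n - 1 - k) + 1) := by
      rwa [show k + (n - 1 - k) + 1 = n by omega]
    rw [show n - k = n - 1 - k + 1 by omega, triple2]
    exact (wpNorm_le_zwpNorm hp').trans (le_ciSup
      (Finite.bddAbove_range fun k : Fin n => zwpNorm d k (n - 1 - k) p) ⟨k, hk⟩)
  rcases hk.lt_or_eq with hk | rfl
  · exact hlt k hk
  · rw [Nat.sub_self, wpNorm_comm]
    exact hlt 0 hn

lemma zwpNorm_le_sqrt_mul_triple1 (hp : p.IsHomogeneous n) {k : ℕ} (hk : k < n) :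
    zwpNorm d k (n - 1 - k) p ≤ √d * triple1 d n p := by
  have hp' : p.IsHomogeneous (k + 1 + (n - 1 - k)) := by rwa [show k + 1 + (n - 1 - k) = n by omega]
  refine (zwpNorm_le_sqrt_mul_wpNorm hp').trans (mul_le_mul_of_nonneg_left ?_ (Real.sqrt_nonneg _))
  rw [triple1, show n - 1 - k = n - (k + 1) by omega]
  exact le_ciSup (Finite.bddAbove_range fun k : Fin (n + 1) => wpNorm d k (n - k) p)
    ⟨k + 1, by omega⟩

end Triple

theorem triple1_le_triple2_le_sqrt_d_triple1_general (d n : ℕ) (hn : 1 ≤ n)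
    (p : MvP d) (hp : p.IsHomogeneous n) :
    triple1 d n p ≤ triple2 d n p ∧
      triple2 d n p ≤ Real.sqrt d * triple1 d n p := by
  have : Nonempty (Fin n) := ⟨⟨0, hn⟩⟩
  exact ⟨ciSup_le fun k => wpNorm_le_triple2 hn hp k.is_le,
    ciSup_le fun k => zwpNorm_le_sqrt_mul_triple1 hp k.is_lt⟩

/-- Theorem 6.1 (second part) / Lemma 6.2: `|||p|||₁ ≤ |||p|||₂ ≤ √d |||p|||₁`. -/
theorem triple1_le_triple2_le_sqrt_d_triple1 (d n : ℕ) (hd : 1 ≤ d) (hn : 1 ≤ n)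
    (p : MvP d) (hp : p.IsHomogeneous n) :
    triple1 d n p ≤ triple2 d n p ∧
      triple2 d n p ≤ Real.sqrt d * triple1 d n p :=
  triple1_le_triple2_le_sqrt_d_triple1_general d n hn p hp

end WP
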